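/- Let μ : ℝ⁺ → ℝ⁺ be C¹ with μ' ≤ 0 and μ(∞) = 0. If w, ŵ ∈ H¹_μ(ℝ⁺, H¹₀(Ω)) with w(0) = ŵ(0) = 0, then (∂_s w − ∂_s ŵ, w − ŵ)_μ = −(1/2) ∫₀^∞ ‖∇(w(s) − ŵ(s))‖²_{L²(Ω)} μ'(s) ds ≥ 0. In particular, the operator T₃(w) = ∂_s w with domain {w ∈ H¹_μ(ℝ⁺, H¹₀(Ω)) : w(0) = 0} is monotone on L²_μ(ℝ⁺, H¹₀(Ω)). -/

import Mathlib

open MeasureTheory Set Filter Topology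

/-! With `u = w - w2`, the energy `E s = μ s * ‖u s‖ ^ 2` has derivative
`μ' s * ‖u s‖ ^ 2 + 2 * μ s * ⟪u' s, u s⟫`, integrable on `(0, ∞)`. Since `E` and `E'` are both
integrable, `E → 0` at `∞`. Near `0`, Cauchy–Schwarz on `(0, ε]` together with `μ s ≥ μ ε` there
gives `E ε ≤ ε * ∫ s in (0, ε], μ s * ‖u' s‖ ^ 2`, so `E → 0` at `0⁺` as well. Hence `∫ E' = 0`,
which is the identity, and the sign comes from `μ' ≤ 0`. -/

theorem stronglyMeasurable_of_hasDerivAt {E : Type*} [NormedAddCommGroup E] [NormedSpace ℝ E]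
    {f f' : ℝ → E} (hf : ∀ x, HasDerivAt f (f' x) x) : StronglyMeasurable f' := by
  -- `E` need not be complete, so compute the derivative in its completion.
  let ι : E →L[ℝ] UniformSpace.Completion E := UniformSpace.Completion.toComplL
  have hι : deriv (ι ∘ f) = fun x => ι (f' x) :=
    funext fun x => (ι.hasFDerivAt.comp_hasDerivAt x (hf x)).deriv
  refine (Embedding.comp_stronglyMeasurable_iff
    (UniformSpace.Completion.isUniformEmbedding_coe E).isEmbedding).1 ?_
  exact hι ▸ stronglyMeasurable_deriv (ι ∘ f)

theorem sq_setIntegral_le_measureReal_mul_setIntegral_sq {α : Type*} [MeasurableSpace α]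
    {μ : Measure α} {s : Set α} {f : α → ℝ} (hs : μ s ≠ ⊤)
    (hf : AEStronglyMeasurable f (μ.restrict s)) (hf2 : IntegrableOn (fun x => f x ^ 2) s μ) :
    (∫ x in s, f x ∂μ) ^ 2 ≤ μ.real s * ∫ x in s, f x ^ 2 ∂μ := by
  rcases eq_or_ne (μ s) 0 with h0 | h0
  · simp [Measure.restrict_eq_zero.2 h0]
  have : IsFiniteMeasure (μ.restrict s) := isFiniteMeasure_restrict.2 hs
  have hfi : IntegrableOn f s μ :=
    ((memLp_two_iff_integrable_sq hf).2 hf2).integrable one_le_two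
  have hjensen := (even_two.convexOn_pow (𝕜 := ℝ)).map_set_average_le
    (continuous_pow 2).continuousOn isClosed_univ h0 hs (by simp) hfi hf2
  have hm : 0 < μ.real s := ENNReal.toReal_pos h0 hs
  simp only [setAverage_eq, smul_eq_mul, mul_pow] at hjensen
  rw [inv_pow, ← div_eq_inv_mul, ← div_eq_inv_mul, div_le_div_iff₀ (by positivity) hm] at hjensen
  nlinarith

section

variable {V : Type*} [NormedAddCommGroup V] [InnerProductSpace ℝ V]

theorem weight_mul_norm_sq_le_mul_integral {μ : ℝ → ℝ} {u du : ℝ → V} {ε : ℝ} (hε : 0 < ε)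
    (hμ : AntitoneOn μ (Ioc 0 ε)) (hμε : 0 < μ ε) (hu : ∀ s, HasDerivAt u (du s) s)
    (hu0 : u 0 = 0) (hdu : IntegrableOn (fun s => μ s * ‖du s‖ ^ 2) (Ioc 0 ε)) :
    μ ε * ‖u ε‖ ^ 2 ≤ ε * ∫ s in Ioc 0 ε, μ s * ‖du s‖ ^ 2 := by
  have hεmem : ε ∈ Ioc 0 ε := ⟨hε, le_rfl⟩
  have hweight : ∀ s ∈ Ioc 0 ε, μ ε * ‖du s‖ ^ 2 ≤ μ s * ‖du s‖ ^ 2 := fun s hs =>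
    mul_le_mul_of_nonneg_right (hμ hs hεmem hs.2) (by positivity)
  have hmeas : AEStronglyMeasurable (fun s => ‖du s‖) (volume.restrict (Ioc 0 ε)) :=
    (stronglyMeasurable_of_hasDerivAt hu).norm.aestronglyMeasurable
  have hsq : IntegrableOn (fun s => ‖du s‖ ^ 2) (Ioc 0 ε) := by
    refine ((hdu.div_const (μ ε)).mono' (hmeas.pow 2) ?_)
    filter_upwards [ae_restrict_mem measurableSet_Ioc] with s hs
    rw [Real.norm_of_nonneg (by positivity), le_div_iff₀ hμε, mul_comm]
    exact hweight s hs
  have hnorm : ‖u ε‖ ≤ ∫ s in Ioc 0 ε, ‖du s‖ := by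
    have := norm_sub_le_integral_of_norm_deriv_le_of_le hε.le
      (fun s _ => (hu s).continuousAt.continuousWithinAt)
      (fun s _ => (hu s).differentiableAt.differentiableWithinAt)
      (B := fun s => ‖du s‖) (Eventually.of_forall fun s _ => by rw [(hu s).deriv]) ?_
    · rwa [hu0, sub_zero, intervalIntegral.integral_of_le hε.le] at this
    · exact (intervalIntegrable_iff_integrableOn_Ioc_of_le hε.le).2
        (((memLp_two_iff_integrable_sq hmeas).2 hsq).integrable one_le_two)
  calc μ ε * ‖u ε‖ ^ 2 ≤ μ ε * (ε * ∫ s in Ioc 0 ε, ‖du s‖ ^ 2) := by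
        gcongr
        calc ‖u ε‖ ^ 2 ≤ (∫ s in Ioc 0 ε, ‖du s‖) ^ 2 := by gcongr
          _ ≤ _ := by
            simpa [hε.le] using sq_setIntegral_le_measureReal_mul_setIntegral_sq
              (by simp) hmeas hsq
    _ = ε * ∫ s in Ioc 0 ε, μ ε * ‖du s‖ ^ 2 := by rw [integral_const_mul]; ring
    _ ≤ ε * ∫ s in Ioc 0 ε, μ s * ‖du s‖ ^ 2 := mul_le_mul_of_nonneg_left
        (setIntegral_mono_on (hsq.const_mul _) hdu measurableSet_Ioc hweight) hε.le

variable {μ μ' : ℝ → ℝ} {u du : ℝ → V}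

theorem tendsto_weight_mul_norm_sq_nhdsGT_zero (hμ : AntitoneOn μ (Ioi 0))
    (hμpos : ∀ s ∈ Ioi (0:ℝ), 0 < μ s) (hu : ∀ s, HasDerivAt u (du s) s) (hu0 : u 0 = 0)
    (hdu : IntegrableOn (fun s => μ s * ‖du s‖ ^ 2) (Ioi 0)) :
    Tendsto (fun s => μ s * ‖u s‖ ^ 2) (𝓝[>] 0) (𝓝 0) := by
  set C := ∫ s in Ioi 0, μ s * ‖du s‖ ^ 2
  have hbound : ∀ ε ∈ Ioi (0:ℝ), μ ε * ‖u ε‖ ^ 2 ≤ ε * C := by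
    intro ε hε
    refine (weight_mul_norm_sq_le_mul_integral hε (hμ.mono Ioc_subset_Ioi_self) (hμpos ε hε)
      hu hu0 (hdu.mono_set Ioc_subset_Ioi_self)).trans (mul_le_mul_of_nonneg_left ?_ hε.le)
    refine setIntegral_mono_set hdu ?_ Ioc_subset_Ioi_self.eventuallyLE
    filter_upwards [ae_restrict_mem measurableSet_Ioi] with s hs
    exact mul_nonneg (hμpos s hs).le (sq_nonneg _)
  have hlin : Tendsto (fun ε : ℝ => ε * C) (𝓝[>] 0) (𝓝 0) := by
    simpa using (tendsto_nhdsWithin_of_tendsto_nhds (continuous_mul_const C).continuousAt :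
      Tendsto (fun ε : ℝ => ε * C) (𝓝[>] 0) (𝓝 (0 * C)))
  refine squeeze_zero' ?_ ?_ hlin
  · filter_upwards [self_mem_nhdsWithin] with s hs
    exact mul_nonneg (hμpos s hs).le (sq_nonneg _)
  · filter_upwards [self_mem_nhdsWithin] with s hs using hbound s hs

theorem integrableOn_weight_mul_inner (hμ : ContinuousOn μ (Ioi 0))
    (hμpos : ∀ s ∈ Ioi (0:ℝ), 0 < μ s) (hu : ∀ s, HasDerivAt u (du s) s)
    (h1 : IntegrableOn (fun s => μ s * ‖u s‖ ^ 2) (Ioi 0))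
    (h2 : IntegrableOn (fun s => μ s * ‖du s‖ ^ 2) (Ioi 0)) :
    IntegrableOn (fun s => μ s * inner ℝ (du s) (u s)) (Ioi 0) := by
  have hucont : Continuous u := continuous_iff_continuousAt.2 fun s => (hu s).continuousAt
  refine ((h2.add h1).div_const 2).mono' ((hμ.aestronglyMeasurable measurableSet_Ioi).mul
    ((stronglyMeasurable_of_hasDerivAt hu).aestronglyMeasurable.inner
      hucont.aestronglyMeasurable)) ?_
  filter_upwards [ae_restrict_mem measurableSet_Ioi] with s hs
  have hμs := hμpos s hs
  rw [Real.norm_eq_abs, abs_mul, abs_of_pos hμs, Pi.add_apply]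
  calc μ s * |inner ℝ (du s) (u s)| ≤ μ s * (‖du s‖ * ‖u s‖) :=
        mul_le_mul_of_nonneg_left (abs_real_inner_le_norm _ _) hμs.le
    _ ≤ _ := by nlinarith [mul_nonneg hμs.le (sq_nonneg (‖du s‖ - ‖u s‖))]

theorem integral_weight_mul_inner_deriv_self (hμ : ∀ s ∈ Ioi (0:ℝ), HasDerivAt μ (μ' s) s)
    (hμ' : ∀ s ∈ Ioi (0:ℝ), μ' s ≤ 0) (hμpos : ∀ s ∈ Ioi (0:ℝ), 0 < μ s)
    (hu : ∀ s, HasDerivAt u (du s) s) (hu0 : u 0 = 0)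
    (h1 : IntegrableOn (fun s => μ s * ‖u s‖ ^ 2) (Ioi 0))
    (h2 : IntegrableOn (fun s => μ s * ‖du s‖ ^ 2) (Ioi 0))
    (h3 : IntegrableOn (fun s => μ' s * ‖u s‖ ^ 2) (Ioi 0)) :
    ∫ s in Ioi 0, μ s * inner ℝ (du s) (u s) = -(1/2) * ∫ s in Ioi 0, μ' s * ‖u s‖ ^ 2 := by
  have hμcont : ContinuousOn μ (Ioi 0) := fun s hs => (hμ s hs).continuousAt.continuousWithinAt
  have hanti : AntitoneOn μ (Ioi 0) :=
    antitoneOn_of_hasDerivWithinAt_nonpos (convex_Ioi 0) hμcont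
      (fun s hs => (hμ s (interior_subset hs)).hasDerivWithinAt)
      (fun s hs => hμ' s (interior_subset hs))
  have hI := integrableOn_weight_mul_inner hμcont hμpos hu h1 h2
  have hderiv : ∀ s ∈ Ioi (0:ℝ), HasDerivAt (fun s => μ s * ‖u s‖ ^ 2)
      (μ' s * ‖u s‖ ^ 2 + 2 * (μ s * inner ℝ (du s) (u s))) s := fun s hs => by
    refine ((hμ s hs).mul (hu s).norm_sq).congr_deriv ?_
    rw [real_inner_comm]; ring
  have hcont : ContinuousWithinAt (fun s => μ s * ‖u s‖ ^ 2) (Ici 0) 0 := by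
    refine continuousWithinAt_Ioi_iff_Ici.1 ?_
    simpa [ContinuousWithinAt, hu0] using
      tendsto_weight_mul_norm_sq_nhdsGT_zero hanti hμpos hu hu0 h2
  have henergy := integral_Ioi_of_hasDerivAt_of_tendsto hcont hderiv (h3.add (hI.const_mul 2))
    (tendsto_zero_of_hasDerivAt_of_integrableOn_Ioi hderiv (h3.add (hI.const_mul 2)) h1)
  rw [integral_add h3 (hI.const_mul 2), integral_const_mul] at henergy
  simp only [hu0, norm_zero] at henergy
  linarith

end

theorem stmt_1_general {V : Type*} [NormedAddCommGroup V] [InnerProductSpace ℝ V]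
    (μ μ' : ℝ → ℝ)
    (hμ : ∀ s ∈ Ioi (0:ℝ), HasDerivAt μ (μ' s) s)
    (hμ'le : ∀ s ∈ Ioi (0:ℝ), μ' s ≤ 0)
    (hμpos : ∀ s ∈ Ioi (0:ℝ), 0 < μ s)
    (w w2 dw dw₂ : ℝ → V)
    (hw : ∀ s, HasDerivAt w (dw s) s) (hw2 : ∀ s, HasDerivAt w2 (dw₂ s) s)
    (hw0 : w 0 = 0) (hw20 : w2 0 = 0)
    (h1 : IntegrableOn (fun s => μ s * ‖w s - w2 s‖ ^ 2) (Ioi 0))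
    (h2 : IntegrableOn (fun s => μ s * ‖dw s - dw₂ s‖ ^ 2) (Ioi 0))
    (h3 : IntegrableOn (fun s => μ' s * ‖w s - w2 s‖ ^ 2) (Ioi 0)) :
    (∫ s in Ioi (0:ℝ), μ s * (inner ℝ (dw s - dw₂ s) (w s - w2 s) : ℝ))
        = -(1/2) * ∫ s in Ioi (0:ℝ), μ' s * ‖w s - w2 s‖ ^ 2 ∧
    0 ≤ ∫ s in Ioi (0:ℝ), μ s * (inner ℝ (dw s - dw₂ s) (w s - w2 s) : ℝ) := by
  have hid := integral_weight_mul_inner_deriv_self (u := fun s => w s - w2 s) hμ hμ'le hμpos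
    (fun s => (hw s).sub (hw2 s)) (by rw [hw0, hw20, sub_zero]) h1 h2 h3
  refine ⟨hid, hid ▸ ?_⟩
  have hdissip : ∫ s in Ioi (0:ℝ), μ' s * ‖w s - w2 s‖ ^ 2 ≤ 0 :=
    setIntegral_nonpos measurableSet_Ioi fun s hs =>
      mul_nonpos_of_nonpos_of_nonneg (hμ'le s hs) (sq_nonneg _)
  linarith

/-- If `w, w2 ∈ H¹_μ(ℝ⁺, H¹₀(Ω))` with `w(0) = w2(0) = 0`, `μ' ≤ 0`,
`μ(∞) = 0`, then `(∂ₛw − ∂ₛw2, w − w2)_μ = −(1/2)∫₀^∞ ‖w(s) − w2(s)‖² μ'(s) ds ≥ 0`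
(the Hilbert space `V` abstracts `H¹₀(Ω)` with the gradient norm); in particular the
operator `T₃ = ∂ₛ` is monotone. -/
theorem stmt_1 {V : Type*} [NormedAddCommGroup V] [InnerProductSpace ℝ V]
    (μ μ' : ℝ → ℝ)
    (hμ : ∀ s ∈ Ioi (0:ℝ), HasDerivAt μ (μ' s) s)
    (hμ'le : ∀ s ∈ Ioi (0:ℝ), μ' s ≤ 0)
    (hμpos : ∀ s ∈ Ioi (0:ℝ), 0 < μ s)
    (hμ0 : Tendsto μ atTop (nhds 0))
    (w w2 dw dw₂ : ℝ → V)
    (hw : ∀ s, HasDerivAt w (dw s) s) (hw2 : ∀ s, HasDerivAt w2 (dw₂ s) s)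
    (hw0 : w 0 = 0) (hw20 : w2 0 = 0)
    (h1 : IntegrableOn (fun s => μ s * ‖w s - w2 s‖ ^ 2) (Ioi 0))
    (h2 : IntegrableOn (fun s => μ s * ‖dw s - dw₂ s‖ ^ 2) (Ioi 0))
    (h3 : IntegrableOn (fun s => μ' s * ‖w s - w2 s‖ ^ 2) (Ioi 0)) :
    (∫ s in Ioi (0:ℝ), μ s * (inner ℝ (dw s - dw₂ s) (w s - w2 s) : ℝ))
        = -(1/2) * ∫ s in Ioi (0:ℝ), μ' s * ‖w s - w2 s‖ ^ 2 ∧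
    0 ≤ ∫ s in Ioi (0:ℝ), μ s * (inner ℝ (dw s - dw₂ s) (w s - w2 s) : ℝ) :=
  stmt_1_general μ μ' hμ hμ'le hμpos w w2 dw dw₂ hw hw2 hw0 hw20 h1 h2 h3
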